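/- Let g : ℝ≥0 → ℝ be nondecreasing and càdlàg, and let x ≤ y be nonnegative reals. If τ_x and τ_y are the (minimal) solutions of the ODEs τ_x'(t) = x + g(τ_x(t)), τ_y'(t) = y + g(τ_y(t)) with τ_x(0) = τ_y(0) = τ₀ ≥ 0 and both vector fields nonnegative along the solutions, then τ_x(t) ≤ τ_y(t) for all t ≥ 0. -/

import Mathlib

/-! When `x = y` this is minimality of `τx`, tested against `τy`. When `x < y`, at any time where
the two solutions meet the right-hand sides differ by `y - x > 0`, so `τy` can never be overtaken
by `τx`: this is the fencing form of the mean value theorem. -/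

theorem le_of_hasDerivAt_of_vectorField_lt {F G τ σ : ℝ → ℝ} {a : ℝ} (hFG : ∀ v, F v < G v)
    (ha : τ a ≤ σ a) (hτ : ∀ t, a ≤ t → HasDerivAt τ (F (τ t)) t)
    (hσ : ∀ t, a ≤ t → HasDerivAt σ (G (σ t)) t) : ∀ t, a ≤ t → τ t ≤ σ t := by
  intro t ht
  refine image_le_of_deriv_right_lt_deriv_boundary' (f' := fun s => F (τ s))
    (B' := fun s => G (σ s)) (fun s hs => (hτ s hs.1).continuousAt.continuousWithinAt)
    (fun s hs => (hτ s hs.1).hasDerivWithinAt) ha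
    (fun s hs => (hσ s hs.1).continuousAt.continuousWithinAt)
    (fun s hs => (hσ s hs.1).hasDerivWithinAt) (fun s _ hs => ?_) ⟨ht, le_rfl⟩
  simpa only [hs] using hFG (σ s)

theorem comparison_ordered_initial_general (g : ℝ → ℝ)
    (x y τ₀ : ℝ) (hxy : x ≤ y)
    (τx τy : ℝ → ℝ)
    (hx0 : τx 0 = τ₀) (hy0 : τy 0 = τ₀)
    (hynn : ∀ t : ℝ, 0 ≤ t → 0 ≤ τy t)
    (hdx : ∀ t : ℝ, 0 ≤ t → HasDerivAt τx (x + g (τx t)) t)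
    (hdy : ∀ t : ℝ, 0 ≤ t → HasDerivAt τy (y + g (τy t)) t)
    (hminx : ∀ σ : ℝ → ℝ, σ 0 = τ₀ → (∀ t : ℝ, 0 ≤ t → 0 ≤ σ t) →
      (∀ t : ℝ, 0 ≤ t → HasDerivAt σ (x + g (σ t)) t) → ∀ t : ℝ, 0 ≤ t → τx t ≤ σ t) :
    ∀ t : ℝ, 0 ≤ t → τx t ≤ τy t := by
  rcases hxy.eq_or_lt with rfl | hlt
  · exact hminx τy hy0 hynn hdy
  · exact le_of_hasDerivAt_of_vectorField_lt (fun v => add_lt_add_left hlt (g v))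
      (hx0.trans hy0.symm).le hdx hdy

/-- comparison lemma for ODEs driven by a nondecreasing càdlàg
vector field: the minimal solutions of `τ' = x + g ∘ τ` and `τ' = y + g ∘ τ`
with the same initial value `τ₀` and nonnegative vector fields along the
solutions are ordered whenever `x ≤ y`. -/
theorem comparison_ordered_initial (g : ℝ → ℝ)
    (hg : MonotoneOn g (Set.Ici 0))
    (hrc : ∀ s : ℝ, 0 ≤ s → ContinuousWithinAt g (Set.Ici s) s)
    (x y τ₀ : ℝ) (hx : 0 ≤ x) (hxy : x ≤ y) (hτ₀ : 0 ≤ τ₀)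
    (τx τy : ℝ → ℝ)
    (hx0 : τx 0 = τ₀) (hy0 : τy 0 = τ₀)
    (hxnn : ∀ t : ℝ, 0 ≤ t → 0 ≤ τx t) (hynn : ∀ t : ℝ, 0 ≤ t → 0 ≤ τy t)
    (hdx : ∀ t : ℝ, 0 ≤ t → HasDerivAt τx (x + g (τx t)) t)
    (hdy : ∀ t : ℝ, 0 ≤ t → HasDerivAt τy (y + g (τy t)) t)
    (hposx : ∀ t : ℝ, 0 ≤ t → 0 ≤ x + g (τx t))
    (hposy : ∀ t : ℝ, 0 ≤ t → 0 ≤ y + g (τy t))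
    (hminx : ∀ σ : ℝ → ℝ, σ 0 = τ₀ → (∀ t : ℝ, 0 ≤ t → 0 ≤ σ t) →
      (∀ t : ℝ, 0 ≤ t → HasDerivAt σ (x + g (σ t)) t) → ∀ t : ℝ, 0 ≤ t → τx t ≤ σ t)
    (hminy : ∀ σ : ℝ → ℝ, σ 0 = τ₀ → (∀ t : ℝ, 0 ≤ t → 0 ≤ σ t) →
      (∀ t : ℝ, 0 ≤ t → HasDerivAt σ (y + g (σ t)) t) → ∀ t : ℝ, 0 ≤ t → τy t ≤ σ t) :
    ∀ t : ℝ, 0 ≤ t → τx t ≤ τy t :=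
  comparison_ordered_initial_general g x y τ₀ hxy τx τy hx0 hy0 hynn hdx hdy hminx
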